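/- Let k ≥ 3 be an integer, let g(p) = k·(2p(1−p)^k + k·p²·(1−p)^{k−1}) for p ∈ [0,1], and let p₀ = 1/(1 + √(k(k−1)/2)). Then 2 − g(p) is strictly decreasing on (0, p₀) and strictly increasing on (p₀, 1). Moreover, there is a unique p* ∈ (1/k, 1) with g(p*) = 1, and g(p) > 1 for all p ∈ (1/k, p*), while g(p) < 1 for all p ∈ (p*, 1]. -/

import Mathlib

/-!
With `s = √(k(k−1)/2)` one has `g'(p) = k(1−p)^{k−2}·(2(1−p)² − k(k−1)p²)` and
`2(1−p)² − k(k−1)p² = 2(1 − (1+s)p)(1 − p + sp)`, so `g` increases on `[0, p₀]` and decreases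
on `[p₀, 1]`, where `p₀ = 1/(1+s)`. For `k ≥ 3` we have `1/k < p₀`, `g(1) = 0`, and
`g(1/k) = (1−1/k)^{k−1}(3−2/k) ≥ (3−2/k)/e > 1` (checked directly for `k < 8`), so the level `1`
is crossed exactly once on `(1/k, 1)`, on the decreasing branch.
-/

/-- `g(p) = k·(2p(1−p)^k + k·p²·(1−p)^{k−1})`; note `2 − g(p) = U_{k,1,p}(2)`. -/
noncomputable def gfun (k : ℕ) (p : ℝ) : ℝ :=
  (k:ℝ) * (2 * p * (1 - p) ^ k + (k:ℝ) * p ^ 2 * (1 - p) ^ (k - 1))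

open Real Set

theorem exists_unique_crossing_of_unimodal {f : ℝ → ℝ} {a c b y : ℝ} (hac : a ≤ c) (hcb : c ≤ b)
    (hf : ContinuousOn f (Icc c b)) (hmono : StrictMonoOn f (Icc a c))
    (hanti : StrictAntiOn f (Icc c b)) (ha : y < f a) (hb : f b < y) :
    ∃ x ∈ Ioo a b, f x = y ∧ (∀ q ∈ Ioo a b, f q = y → q = x) ∧
      (∀ p ∈ Ioo a x, y < f p) ∧ (∀ p ∈ Ioc x b, f p < y) := by
  have rise : ∀ p ∈ Icc a c, y < f p := fun p hp =>
    ha.trans_le (hmono.monotoneOn ⟨le_rfl, hac⟩ hp hp.1)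
  obtain ⟨x, hx, rfl⟩ := intermediate_value_Ioo' hcb hf ⟨hb, rise c ⟨hac, le_rfl⟩⟩
  have hxc : x ∈ Icc c b := Ioo_subset_Icc_self hx
  refine ⟨x, ⟨hac.trans_lt hx.1, hx.2⟩, rfl, ?_, ?_, ?_⟩
  · rintro q ⟨haq, hqb⟩ hq
    rcases le_or_gt q c with hqc | hcq
    · exact absurd hq (rise q ⟨haq.le, hqc⟩).ne'
    · exact hanti.injOn ⟨hcq.le, hqb.le⟩ hxc hq
  · rintro p ⟨hap, hpx⟩
    rcases le_or_gt p c with hpc | hcp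
    · exact rise p ⟨hap.le, hpc⟩
    · exact hanti ⟨hcp.le, hpx.le.trans hxc.2⟩ hxc hpx
  · rintro p ⟨hxp, hpb⟩
    exact hanti hxc ⟨hxc.1.trans hxp.le, hpb⟩ hxp

theorem exp_neg_one_le_one_sub_one_div_pow (k : ℕ) : exp (-1) ≤ (1 - 1 / (k : ℝ)) ^ (k - 1) := by
  rcases k with _ | _ | m
  · simp
  · simp
  · have h : 1 - 1 / ((m + 2 : ℕ) : ℝ) = (1 + ((m + 1 : ℕ) : ℝ)⁻¹)⁻¹ := by
      push_cast; field_simp; ring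
    rw [h, Nat.add_sub_cancel, inv_pow, exp_neg]
    exact inv_anti₀ (by positivity) one_add_inv_pow_le_exp

theorem hasDerivAt_gfun {k : ℕ} (hk : 2 ≤ k) (p : ℝ) :
    HasDerivAt (gfun k)
      (k * (1 - p) ^ (k - 2) * (2 * (1 - p) ^ 2 - k * (k - 1) * p ^ 2)) p := by
  obtain ⟨n, rfl⟩ := Nat.exists_eq_add_of_le' hk
  have hq : HasDerivAt (fun q : ℝ => 1 - q) (-1) p := (hasDerivAt_id' p).const_sub 1
  have h := ((((hasDerivAt_id' p).const_mul 2).mul (hq.fun_pow (n + 2))).add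
    ((((hasDerivAt_id' p).fun_pow 2).const_mul ((n + 2 : ℕ) : ℝ)).mul
      (hq.fun_pow (n + 1)))).const_mul ((n + 2 : ℕ) : ℝ)
  refine h.congr_deriv ?_
  simp only [Nat.add_sub_cancel, Nat.add_one_sub_one]
  push_cast
  ring

theorem continuous_gfun (k : ℕ) : Continuous (gfun k) := by
  unfold gfun
  fun_prop

noncomputable def gfunPeak (k : ℕ) : ℝ := 1 / (1 + √((k : ℝ) * ((k : ℝ) - 1) / 2))

theorem two_mul_one_sub_sq_sub_eq (k : ℕ) (p : ℝ) :
    2 * (1 - p) ^ 2 - k * (k - 1) * p ^ 2 =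
      2 * (1 - (1 + √((k : ℝ) * ((k : ℝ) - 1) / 2)) * p) *
        (1 - p + √((k : ℝ) * ((k : ℝ) - 1) / 2) * p) := by
  have hs : √((k : ℝ) * ((k : ℝ) - 1) / 2) ^ 2 = (k : ℝ) * ((k : ℝ) - 1) / 2 := by
    refine sq_sqrt (div_nonneg ?_ zero_le_two)
    rcases k with _ | m
    · simp
    · push_cast; nlinarith
  linear_combination 2 * p ^ 2 * hs

theorem lt_gfunPeak_iff {k : ℕ} {p : ℝ} :
    p < gfunPeak k ↔ 0 < 1 - (1 + √((k : ℝ) * ((k : ℝ) - 1) / 2)) * p := by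
  rw [gfunPeak, lt_div_iff₀ (by positivity), sub_pos, mul_comm]

theorem gfunPeak_lt_iff {k : ℕ} {p : ℝ} :
    gfunPeak k < p ↔ 1 - (1 + √((k : ℝ) * ((k : ℝ) - 1) / 2)) * p < 0 := by
  rw [gfunPeak, div_lt_iff₀ (by positivity), sub_neg, mul_comm]

theorem gfunPeak_le_one (k : ℕ) : gfunPeak k ≤ 1 :=
  div_le_one_of_le₀ (le_add_of_nonneg_right (sqrt_nonneg _)) (by positivity)

theorem one_div_lt_gfunPeak {k : ℕ} (hk : 3 ≤ k) : 1 / (k : ℝ) < gfunPeak k := by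
  have hk' : (3 : ℝ) ≤ k := by exact_mod_cast hk
  refine one_div_lt_one_div_of_lt (by positivity) ?_
  have : √((k : ℝ) * ((k : ℝ) - 1) / 2) < k - 1 := (sqrt_lt' (by linarith)).2 (by nlinarith)
  linarith

theorem two_mul_one_sub_sq_sub_pos {k : ℕ} {p : ℝ} (hp0 : 0 ≤ p) (hp : p < gfunPeak k) :
    0 < 2 * (1 - p) ^ 2 - k * (k - 1) * p ^ 2 := by
  have hp1 : 0 < 1 - p := sub_pos.2 (hp.trans_le (gfunPeak_le_one k))
  rw [two_mul_one_sub_sq_sub_eq]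
  have := lt_gfunPeak_iff.1 hp
  positivity

theorem two_mul_one_sub_sq_sub_neg {k : ℕ} {p : ℝ} (hp : gfunPeak k < p) (hp1 : p < 1) :
    2 * (1 - p) ^ 2 - k * (k - 1) * p ^ 2 < 0 := by
  have hp0 : 0 < p := ((by unfold gfunPeak; positivity) : 0 < gfunPeak k).trans hp
  rw [two_mul_one_sub_sq_sub_eq]
  refine mul_neg_of_neg_of_pos (by linarith [gfunPeak_lt_iff.1 hp]) ?_
  have := sub_pos.2 hp1
  positivity

theorem strictMonoOn_gfun {k : ℕ} (hk : 2 ≤ k) : StrictMonoOn (gfun k) (Icc 0 (gfunPeak k)) := by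
  refine strictMonoOn_of_hasDerivWithinAt_pos (convex_Icc _ _)
    (continuous_gfun k).continuousOn
    (fun p _ => (hasDerivAt_gfun hk p).hasDerivWithinAt) ?_
  rw [interior_Icc]
  rintro p ⟨hp0, hp⟩
  have := two_mul_one_sub_sq_sub_pos hp0.le hp
  have := sub_pos.2 (hp.trans_le (gfunPeak_le_one k))
  have : 0 < k := by omega
  positivity

theorem strictAntiOn_gfun {k : ℕ} (hk : 2 ≤ k) : StrictAntiOn (gfun k) (Icc (gfunPeak k) 1) := by
  refine strictAntiOn_of_hasDerivWithinAt_neg (convex_Icc _ _)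
    (continuous_gfun k).continuousOn
    (fun p _ => (hasDerivAt_gfun hk p).hasDerivWithinAt) ?_
  rw [interior_Icc]
  rintro p ⟨hp, hp1⟩
  have := sub_pos.2 hp1
  have : 0 < k := by omega
  exact mul_neg_of_pos_of_neg (by positivity) (two_mul_one_sub_sq_sub_neg hp hp1)

theorem gfun_one_div {k : ℕ} (hk : 1 ≤ k) :
    gfun k (1 / k) = (1 - 1 / (k : ℝ)) ^ (k - 1) * (3 - 2 / k) := by
  obtain ⟨m, rfl⟩ := Nat.exists_eq_add_of_le' hk
  simp only [gfun, Nat.add_sub_cancel, pow_succ]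
  field_simp
  ring

theorem one_lt_gfun_one_div {k : ℕ} (hk : 3 ≤ k) : 1 < gfun k (1 / k) := by
  rw [gfun_one_div (by omega)]
  rcases lt_or_ge k 8 with hk8 | hk8
  · interval_cases k <;> norm_num
  · have h3 : exp 1 < 3 - 2 / k := by
      have : (2 : ℝ) / k ≤ 2 / 8 := by gcongr; exact_mod_cast hk8
      linarith [exp_one_lt_d9]
    calc (1 : ℝ) = exp (-1) * exp 1 := by rw [← exp_add]; simp
      _ < _ := mul_lt_mul' (exp_neg_one_le_one_sub_one_div_pow k) h3 (exp_pos 1).le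
          ((exp_pos _).trans_le (exp_neg_one_le_one_sub_one_div_pow k))

theorem gfun_one {k : ℕ} (hk : 2 ≤ k) : gfun k 1 = 0 := by
  simp [gfun, zero_pow (by omega : k ≠ 0), zero_pow (by omega : k - 1 ≠ 0)]

theorem U2_monotonicity_and_unique_root (k : ℕ) (hk : 3 ≤ k) :
    StrictAntiOn (fun p : ℝ => 2 - gfun k p)
      (Set.Ioo (0:ℝ) (1 / (1 + Real.sqrt ((k:ℝ) * ((k:ℝ) - 1) / 2)))) ∧
    StrictMonoOn (fun p : ℝ => 2 - gfun k p)
      (Set.Ioo (1 / (1 + Real.sqrt ((k:ℝ) * ((k:ℝ) - 1) / 2))) 1) ∧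
    ∃ pstar ∈ Set.Ioo (1 / (k:ℝ)) 1,
      gfun k pstar = 1 ∧
      (∀ q ∈ Set.Ioo (1 / (k:ℝ)) 1, gfun k q = 1 → q = pstar) ∧
      (∀ p ∈ Set.Ioo (1 / (k:ℝ)) pstar, 1 < gfun k p) ∧
      (∀ p ∈ Set.Ioc pstar 1, gfun k p < 1) := by
  have hk2 : 2 ≤ k := by omega
  have hmono := strictMonoOn_gfun hk2
  have hanti := strictAntiOn_gfun hk2
  refine ⟨fun p hp q hq hpq => ?_, fun p hp q hq hpq => ?_, ?_⟩
  · exact sub_lt_sub_left (hmono (Ioo_subset_Icc_self hp) (Ioo_subset_Icc_self hq) hpq) 2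
  · exact sub_lt_sub_left (hanti (Ioo_subset_Icc_self hp) (Ioo_subset_Icc_self hq) hpq) 2
  · exact exists_unique_crossing_of_unimodal (one_div_lt_gfunPeak hk).le (gfunPeak_le_one k)
      (continuous_gfun k).continuousOn
      (hmono.mono (Icc_subset_Icc_left (by positivity))) hanti (one_lt_gfun_one_div hk)
      (by rw [gfun_one hk2]; exact one_pos)
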